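/- arXiv:0810.5423 — 2 statements merged into one kernel-verified Lean document; each statement's English description precedes it below -/
import Mathlib

section
/- For every real number q ≠ 1, every natural number k, and every natural number n ≥ 1, one has Σ_{γ=0}^{n−1} q^γ γ^k = (1/(1−q)) · Σ_{i=0}^{k} (q/(1−q))^i Δ^i 0^k − (q^n/(1−q)) · Σ_{i=0}^{k} (q/(1−q))^i Δ^i n^k. -/
/-!
Write `r = q / (1 - q)` and `S f y = ∑_{i ≤ k} r^i Δ^i f y` for a function `f` whose `(k+1)`-st
forward difference vanishes. Since `Δ^i f (y + 1) = Δ^i f y + Δ^(i+1) f y` and `q r^i = (1 - q) r^(i+1)`,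
the sum `S f y - q S f (y + 1)` telescopes to `(1 - q) f y`. Hence `γ ↦ q^γ S f γ / (1 - q)` is an
antidifference of `γ ↦ -q^γ f γ`, and summing over `γ < n` gives the formula for `f = (· ^ k)`.
-/

open Finset Function fwdDiff

/-- The `i`-th forward finite difference of the function `γ ↦ γ^k` evaluated at the
point `a`, i.e. `Δ^i a^k = ∑_{j=0}^{i} (-1)^(i-j) C(i,j) (a+j)^k` (with `0^0 = 1`). -/
noncomputable def finDiff (i k : ℕ) (a : ℝ) : ℝ :=
  ∑ j ∈ Finset.range (i + 1), (-1 : ℝ) ^ (i - j) * (i.choose j : ℝ) * (a + (j : ℝ)) ^ k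

lemma finDiff_eq_fwdDiff_iter (i k : ℕ) (a : ℝ) :
    finDiff i k a = Δ_[1] ^[i] (fun x : ℝ => x ^ k) a := by
  rw [fwdDiff_iter_eq_sum_shift, finDiff]
  refine sum_congr rfl fun j _ => ?_
  push_cast [zsmul_eq_mul, nsmul_eq_mul]
  ring

lemma fwdDiff_iter_apply_add {M G : Type*} [AddCommMonoid M] [AddCommGroup G] (h : M)
    (f : M → G) (n : ℕ) (y : M) :
    Δ_[h] ^[n] f (y + h) = Δ_[h] ^[n] f y + Δ_[h] ^[n + 1] f y := by
  rw [iterate_succ_apply', fwdDiff]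
  abel

section Field

variable {K M : Type*} [Field K] [AddCommMonoid M] {q : K}

lemma sum_fwdDiff_iter_sub_mul_sum_fwdDiff_iter_add (hq : q ≠ 1) {k : ℕ} {h : M} {f : M → K}
    (hf : Δ_[h] ^[k + 1] f = 0) (y : M) :
    ∑ i ∈ range (k + 1), (q / (1 - q)) ^ i * Δ_[h] ^[i] f y -
        q * ∑ i ∈ range (k + 1), (q / (1 - q)) ^ i * Δ_[h] ^[i] f (y + h) =
      (1 - q) * f y := by
  have h1q : (1 : K) - q ≠ 0 := sub_ne_zero.mpr hq.symm
  have hr (i : ℕ) : q * (q / (1 - q)) ^ i = (1 - q) * (q / (1 - q)) ^ (i + 1) := by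
    rw [pow_succ]
    field_simp
  calc ∑ i ∈ range (k + 1), (q / (1 - q)) ^ i * Δ_[h] ^[i] f y -
        q * ∑ i ∈ range (k + 1), (q / (1 - q)) ^ i * Δ_[h] ^[i] f (y + h)
      = (1 - q) * ∑ i ∈ range (k + 1), ((q / (1 - q)) ^ i * Δ_[h] ^[i] f y -
          (q / (1 - q)) ^ (i + 1) * Δ_[h] ^[i + 1] f y) := by
        simp only [mul_sum, ← sum_sub_distrib]
        refine sum_congr rfl fun i _ => ?_
        rw [fwdDiff_iter_apply_add]
        linear_combination -Δ_[h] ^[i + 1] f y * hr i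
    _ = (1 - q) * f y := by
        rw [sum_range_sub', hf]
        simp

lemma sum_range_pow_mul_eq_of_fwdDiff_iter_eq_zero (hq : q ≠ 1) {k : ℕ} {f : K → K}
    (hf : Δ_[1] ^[k + 1] f = 0) (n : ℕ) :
    ∑ γ ∈ range n, q ^ γ * f γ =
      1 / (1 - q) * ∑ i ∈ range (k + 1), (q / (1 - q)) ^ i * Δ_[1] ^[i] f 0 -
      q ^ n / (1 - q) * ∑ i ∈ range (k + 1), (q / (1 - q)) ^ i * Δ_[1] ^[i] f n := by
  have h1q : (1 : K) - q ≠ 0 := sub_ne_zero.mpr hq.symm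
  set S : K → K := fun y => ∑ i ∈ range (k + 1), (q / (1 - q)) ^ i * Δ_[1] ^[i] f y
  calc ∑ γ ∈ range n, q ^ γ * f γ
      = ∑ γ ∈ range n, (q ^ γ / (1 - q) * S γ - q ^ (γ + 1) / (1 - q) * S ↑(γ + 1)) := by
        refine sum_congr rfl fun γ _ => ?_
        have key := sum_fwdDiff_iter_sub_mul_sum_fwdDiff_iter_add hq hf (γ : K)
        rw [Nat.cast_succ]
        field_simp
        linear_combination -q ^ γ * key
    _ = 1 / (1 - q) * S 0 - q ^ n / (1 - q) * S n := by
        rw [sum_range_sub']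
        simp

end Field

theorem sum_geom_mul_pow_eq_general (q : ℝ) (hq : q ≠ 1) (k n : ℕ) :
    ∑ γ ∈ Finset.range n, q ^ γ * (γ : ℝ) ^ k =
      (1 / (1 - q)) * ∑ i ∈ Finset.range (k + 1), (q / (1 - q)) ^ i * finDiff i k 0 -
      (q ^ n / (1 - q)) * ∑ i ∈ Finset.range (k + 1), (q / (1 - q)) ^ i * finDiff i k n := by
  simp only [finDiff_eq_fwdDiff_iter]
  exact sum_range_pow_mul_eq_of_fwdDiff_iter_eq_zero hq
    (fwdDiff_iter_pow_eq_zero_of_lt k.lt_succ_self) n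

/-- For every real `q ≠ 1`, every natural `k` and every natural `n ≥ 1`,
`∑_{γ=0}^{n-1} q^γ γ^k = (1/(1-q)) ∑_{i=0}^{k} (q/(1-q))^i Δ^i 0^k
  - (q^n/(1-q)) ∑_{i=0}^{k} (q/(1-q))^i Δ^i n^k`. -/
theorem sum_geom_mul_pow_eq (q : ℝ) (hq : q ≠ 1) (k n : ℕ) (hn : 1 ≤ n) :
    ∑ γ ∈ Finset.range n, q ^ γ * (γ : ℝ) ^ k =
      (1 / (1 - q)) * ∑ i ∈ Finset.range (k + 1), (q / (1 - q)) ^ i * finDiff i k 0 -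
      (q ^ n / (1 - q)) * ∑ i ∈ Finset.range (k + 1), (q / (1 - q)) ^ i * finDiff i k n :=
  sum_geom_mul_pow_eq_general q hq k n
end

section
/- For every integer β, the series Σ_{γ∈ℤ} D_2(γ) e^{h(β−γ)} converges absolutely and equals 0; i.e., the discrete convolution of D_2 with the discrete function β ↦ e^{hβ} is identically zero. -/
/-!
Up to corrections at `|γ| ≤ 1`, `D_2(γ) = (A / (λ p)) λ^{|γ|}`, and `∑_γ D_2(γ) e^{h(β-γ)}` is
`e^{hβ}` times `∑_γ D_2(γ) E^{-γ}` with `E = e^h`. The two-sided geometric series gives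
`∑_γ λ^{|γ|} E^{-γ} = E (1 - λ²) / ((E - λ)(1 - λE))`. Since `P_2(X) = p X² + p₁ X + p` is
palindromic, `λ P_2'(λ) = p (λ² - 1)` at a root, so `A (1 + λ) = 2 (1 - λ)(E - λ)(1 - λE)` and the
series part contributes `2E (1 - λ)² / (λ p)`. Adding the corrections leaves
`2E (p λ² + p₁ λ + p) / (λ p) = 0`.
-/

/-- The polynomial `P_2(λ) = (1-e^{2h})(1-λ)² - 2h(λ(e^{2h}+1) - e^h(λ²+1))`. -/
noncomputable def P2 (h x : ℝ) : ℝ :=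
  (1 - Real.exp (2 * h)) * (1 - x) ^ 2 -
    2 * h * (x * (Real.exp (2 * h) + 1) - Real.exp h * (x ^ 2 + 1))

theorem hasSum_pow_natAbs_mul_zpow {K : Type*} [NormedField K] {r x : K}
    (h₁ : ‖r * x‖ < 1) (h₂ : ‖r * x⁻¹‖ < 1) :
    HasSum (fun n : ℤ => r ^ n.natAbs * x ^ n)
      ((1 - r * x)⁻¹ + r * x⁻¹ * (1 - r * x⁻¹)⁻¹) := by
  refine HasSum.of_nat_of_neg_add_one ?_ ?_
  · simpa [mul_pow] using hasSum_geometric_of_norm_lt_one h₁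
  · have hterm : (fun n : ℕ => r ^ (-((n : ℤ) + 1)).natAbs * x ^ (-((n : ℤ) + 1))) =
        fun n : ℕ => r * x⁻¹ * (r * x⁻¹) ^ n := by
      funext n
      rw [show (-((n : ℤ) + 1)).natAbs = n + 1 by omega, zpow_neg, ← Nat.cast_succ, zpow_natCast,
        ← inv_pow, Nat.succ_eq_add_one, pow_succ, pow_succ, mul_pow]
      ring
    rw [hterm]
    exact (hasSum_geometric_of_norm_lt_one h₂).mul_left (r * x⁻¹)

theorem HasSum.add_sum_sub_of_eq_off_finset {α β : Type*} [AddCommGroup α] [TopologicalSpace α]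
    [IsTopologicalAddGroup α] {f g : β → α} {a : α} (s : Finset β) (hg : HasSum g a)
    (hfg : ∀ b ∉ s, f b = g b) : HasSum f (a + ∑ b ∈ s, (f b - g b)) := by
  have hcorr : HasSum (fun b => f b - g b) (∑ b ∈ s, (f b - g b)) :=
    hasSum_sum_of_ne_finset_zero fun b hb => sub_eq_zero.2 (hfg b hb)
  simpa using hg.add hcorr

section P2

variable {h p p1 : ℝ}
  (hp : p = (1 - Real.exp (2 * h)) + 2 * h * Real.exp h)
  (hp1 : p1 = -2 * (1 - Real.exp (2 * h)) - 2 * h * (Real.exp (2 * h) + 1))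
include hp hp1

theorem P2_eq_palindromic (x : ℝ) : P2 h x = p * x ^ 2 + p1 * x + p := by
  subst hp hp1
  unfold P2
  ring

theorem deriv_P2 (x : ℝ) : deriv (P2 h) x = 2 * p * x + p1 := by
  rw [funext (P2_eq_palindromic hp hp1)]
  have hd : HasDerivAt (fun y => p * y ^ 2 + p1 * y + p) (p * (2 * x) + p1 * 1) x := by
    simpa using
      (((hasDerivAt_pow 2 x).const_mul p).add ((hasDerivAt_id x).const_mul p1)).add_const p
  rw [hd.deriv]
  ring

end P2

theorem mul_one_add_of_eq_div_deriv_P2 {h p p1 lam A : ℝ}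
    (hp : p = (1 - Real.exp (2 * h)) + 2 * h * Real.exp h)
    (hp1 : p1 = -2 * (1 - Real.exp (2 * h)) - 2 * h * (Real.exp (2 * h) + 1))
    (hpne : p ≠ 0) (hroot : P2 h lam = 0) (hlam0 : lam ≠ 0) (hlam1 : lam ≠ 1)
    (hder : deriv (P2 h) lam ≠ 0)
    (hA : A = 2 * (1 - lam) ^ 2 *
        (lam * (Real.exp (2 * h) + 1) - Real.exp h * (lam ^ 2 + 1)) * p
        / (lam * deriv (P2 h) lam)) :
    A * (1 + lam) = 2 * (1 - lam) * (Real.exp h - lam) * (1 - lam * Real.exp h) := by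
  have hq : p * lam ^ 2 + p1 * lam + p = 0 := (P2_eq_palindromic hp hp1 lam).symm.trans hroot
  have hAmul : A * (lam * (2 * p * lam + p1)) = 2 * (1 - lam) ^ 2 *
      (lam * (Real.exp h ^ 2 + 1) - Real.exp h * (lam ^ 2 + 1)) * p := by
    rw [← deriv_P2 hp hp1, hA, ← Real.exp_nat_mul, Nat.cast_ofNat]
    exact div_mul_cancel₀ _ (mul_ne_zero hlam0 hder)
  have hfactor : p * (lam - 1) *
      (A * (1 + lam) - 2 * (1 - lam) * (Real.exp h - lam) * (1 - lam * Real.exp h)) = 0 := by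
    linear_combination hAmul - A * hq
  simpa [hpne, sub_eq_zero.not.2 hlam1, sub_eq_zero] using hfactor

theorem mul_sum_pow_natAbs_mul_inv_zpow {lam A E : ℝ} (hE : 1 < E) (hlam : |lam| < E⁻¹)
    (hA : A * (1 + lam) = 2 * (1 - lam) * (E - lam) * (1 - lam * E)) :
    A * ((1 - lam * E⁻¹)⁻¹ + lam * E * (1 - lam * E)⁻¹) = 2 * E * (1 - lam) ^ 2 := by
  have hE0 : 0 < E := zero_lt_one.trans hE
  obtain ⟨hlam_gt, hlam_lt⟩ := abs_lt.1 (hlam.trans (inv_lt_one_of_one_lt₀ hE))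
  have hlamE : lam * E < 1 := by
    simpa [inv_mul_cancel₀ hE0.ne'] using
      mul_lt_mul_of_pos_right ((le_abs_self lam).trans_lt hlam) hE0
  have hne₁ : E - lam ≠ 0 := by linarith
  have hne₂ : 1 - lam * E ≠ 0 := by linarith
  have hne₃ : 1 + lam ≠ 0 := by linarith
  refine mul_right_cancel₀ hne₃ ?_
  rw [mul_right_comm, hA]
  field_simp
  ring

theorem hasSum_D2_mul_inv_zpow_eq_zero {p p1 lam A C E : ℝ} {D2 : ℤ → ℝ} (hE : 1 < E)
    (hpne : p ≠ 0) (hq : p * lam ^ 2 + p1 * lam + p = 0) (hlam0 : lam ≠ 0) (hlam1 : |lam| < E⁻¹)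
    (hA : A * (1 + lam) = 2 * (1 - lam) * (E - lam) * (1 - lam * E))
    (hC : C = 1 + 2 * E + E ^ 2 + E * p1 / p)
    (hD : ∀ β : ℤ, D2 β =
      if β = 0 then (2 * C + A / lam) / p
      else if β.natAbs = 1 then (-2 * E + A) / p
      else A * lam ^ (β.natAbs - 1) / p) :
    HasSum (fun γ : ℤ => D2 γ * E⁻¹ ^ γ) 0 := by
  have hE0 : 0 < E := zero_lt_one.trans hE
  have hlam_lt_one : |lam| < 1 := hlam1.trans (inv_lt_one_of_one_lt₀ hE)
  have h₁ : |lam * E⁻¹| < 1 := by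
    rw [abs_mul, abs_inv, abs_of_pos hE0]
    exact mul_lt_one_of_nonneg_of_lt_one_left (abs_nonneg lam) hlam_lt_one
      (inv_lt_one_of_one_lt₀ hE).le
  have h₂ : |lam * E| < 1 := by
    rw [abs_mul, abs_of_pos hE0]
    simpa [inv_mul_cancel₀ hE0.ne'] using mul_lt_mul_of_pos_right hlam1 hE0
  have hS := hasSum_pow_natAbs_mul_zpow (r := lam) (x := E⁻¹) h₁ (by rwa [inv_inv])
  rw [inv_inv] at hS
  set S := (1 - lam * E⁻¹)⁻¹ + lam * E * (1 - lam * E)⁻¹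
  have hAS : A * S = 2 * E * (1 - lam) ^ 2 := mul_sum_pow_natAbs_mul_inv_zpow hE hlam1 hA
  have hf := (hS.mul_left (A / (lam * p))).add_sum_sub_of_eq_off_finset {-1, 0, 1}
    (f := fun γ => D2 γ * E⁻¹ ^ γ) fun γ hγ => by
      simp only [Finset.mem_insert, Finset.mem_singleton, not_or] at hγ
      obtain ⟨k, hk⟩ : ∃ k, γ.natAbs = k + 1 := Nat.exists_eq_add_one.2 (by omega)
      rw [hD, if_neg hγ.2.1, if_neg (by omega), hk, Nat.add_sub_cancel, pow_succ]
      field_simp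
  suffices hval : A / (lam * p) * S +
      ∑ γ ∈ {-1, 0, 1}, (D2 γ * E⁻¹ ^ γ - A / (lam * p) * (lam ^ γ.natAbs * E⁻¹ ^ γ)) = 0 from
    hval ▸ hf
  rw [Finset.sum_insert (by decide), Finset.sum_insert (by decide), Finset.sum_singleton,
    hD, hD, hD]
  norm_num
  rw [div_mul_eq_mul_div, hAS, hC]
  field_simp
  linear_combination (2 * E ^ 2) * hq

/-- For every integer `β`, the series `∑_{γ ∈ ℤ} D_2(γ) e^{h(β-γ)}` converges and
equals `0`: the discrete convolution of `D_2` with `β ↦ e^{hβ}` is identically zero. -/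
theorem D2_conv_exp (h p p1 lam A C : ℝ) (D2 : ℤ → ℝ)
    (hh : 0 < h)
    (hp : p = (1 - Real.exp (2 * h)) + 2 * h * Real.exp h)
    (hp1 : p1 = -2 * (1 - Real.exp (2 * h)) - 2 * h * (Real.exp (2 * h) + 1))
    (hpne : p ≠ 0)
    (hroot : P2 h lam = 0)
    (hlam0 : 0 < |lam|) (hlam1 : |lam| < Real.exp (-h))
    (hder : deriv (P2 h) lam ≠ 0)
    (hA : A = 2 * (1 - lam) ^ 2 *
        (lam * (Real.exp (2 * h) + 1) - Real.exp h * (lam ^ 2 + 1)) * p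
        / (lam * deriv (P2 h) lam))
    (hC : C = 1 + 2 * Real.exp h + Real.exp (2 * h) + Real.exp h * p1 / p)
    (hD : ∀ β : ℤ, D2 β =
      if β = 0 then (2 * C + A / lam) / p
      else if β.natAbs = 1 then (-2 * Real.exp h + A) / p
      else A * lam ^ (β.natAbs - 1) / p)
    (β : ℤ) :
    HasSum (fun γ : ℤ => D2 γ * Real.exp (h * ((β : ℝ) - (γ : ℝ)))) 0 := by
  have hE : 1 < Real.exp h := Real.one_lt_exp_iff.2 hh
  have hlam : |lam| < (Real.exp h)⁻¹ := by rwa [← Real.exp_neg]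
  have hlam_ne_one : lam ≠ 1 := by
    rintro rfl
    exact (abs_one.symm.trans_lt hlam).not_gt (inv_lt_one_of_one_lt₀ hE)
  have hA' := mul_one_add_of_eq_div_deriv_P2 hp hp1 hpne hroot (abs_pos.1 hlam0) hlam_ne_one hder hA
  have hC' : C = 1 + 2 * Real.exp h + Real.exp h ^ 2 + Real.exp h * p1 / p := by
    rw [hC, ← Real.exp_nat_mul, Nat.cast_ofNat]
  have hq : p * lam ^ 2 + p1 * lam + p = 0 := (P2_eq_palindromic hp hp1 lam).symm.trans hroot
  have hsum := (hasSum_D2_mul_inv_zpow_eq_zero hE hpne hq (abs_pos.1 hlam0) hlam hA' hC'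
    hD).mul_left (Real.exp (h * β))
  rw [mul_zero] at hsum
  refine hsum.congr_fun fun γ => ?_
  rw [mul_sub, Real.exp_sub, Real.exp_mul h γ, Real.rpow_intCast, inv_zpow]
  ring
end
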